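/- Let k_x, k_z, k_1, k_2, k_3, μ_F > 0, set θ* := k_3/(k_1 + k_3) and ε* := k_x·k_z/(k_1·k_3 + k_x·k_2), and let O ⊆ ℝ^{n1} be any set. Then for every ε ∈ (0, ε*) there exists λ > 0 such that for all a, b ≥ 0 and all x ∈ ℝ^{n1}: (1 − θ*)·(−k_x·a² + μ_F·𝟙_O(x) + k_3·a·b) + θ*·(k_1·a·b + k_2·b² − (k_z/ε)·b²) ≤ −λ·(a² + b²) + μ_F·𝟙_O(x), where 𝟙_O is the indicator function of O (equal to 1 on O and 0 elsewhere). -/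

import Mathlib

/-!
With `θ = k₃/(k₁+k₃)` the two cross terms `(1-θ)k₃ab` and `θk₁ab` have the same coefficient, so
the left-hand side is `-(A a² - 2C ab + B b²) + (1-θ) μ_F 𝟙_O(x)` with `A = (1-θ)kₓ`, `C = θk₁`,
`B = θ(k_z/ε - k₂)`. The condition `ε < ε*` is exactly `k₁k₃ < kₓ(k_z/ε - k₂)`, i.e. `C² < AB`, so
this binary quadratic form is positive definite and dominates `λ(a² + b²)`.
-/

/-- `λ = (AB - C²)/(A + B)` works because
`(A + B)(A a² - 2C ab + B b²) - (AB - C²)(a² + b²) = (A a - C b)² + (C a - B b)²`. -/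
theorem exists_pos_mul_sq_add_sq_le_of_sq_lt_mul {A B C : ℝ} (hA : 0 < A) (hC : C ^ 2 < A * B) :
    ∃ lam : ℝ, 0 < lam ∧ ∀ a b : ℝ,
      lam * (a ^ 2 + b ^ 2) ≤ A * a ^ 2 - 2 * C * a * b + B * b ^ 2 := by
  have hB : 0 < B := pos_of_mul_pos_right ((sq_nonneg C).trans_lt hC) hA.le
  have hAB : 0 < A + B := add_pos hA hB
  refine ⟨(A * B - C ^ 2) / (A + B), div_pos (sub_pos.mpr hC) hAB, fun a b => ?_⟩
  rw [div_mul_eq_mul_div, div_le_iff₀ hAB]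
  nlinarith [sq_nonneg (A * a - C * b), sq_nonneg (C * a - B * b)]

theorem composite_quadratic_estimate_recurrence_general
    (n1 : ℕ)
    (kx kz k1 k2 k3 μF : ℝ)
    (hkx : 0 < kx) (hk1 : 0 < k1) (hk2 : 0 < k2) (hk3 : 0 < k3)
    (hμF : 0 < μF)
    (O : Set (EuclideanSpace ℝ (Fin n1))) :
    ∀ ε : ℝ, 0 < ε → ε < kx * kz / (k1 * k3 + kx * k2) →
      ∃ lam : ℝ, 0 < lam ∧ ∀ (a b : ℝ) (x : EuclideanSpace ℝ (Fin n1)),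
        0 ≤ a → 0 ≤ b →
        (1 - k3 / (k1 + k3)) * (-(kx * a ^ 2) + μF * O.indicator 1 x + k3 * a * b)
          + (k3 / (k1 + k3)) * (k1 * a * b + k2 * b ^ 2 - (kz / ε) * b ^ 2)
        ≤ -lam * (a ^ 2 + b ^ 2) + μF * O.indicator 1 x := by
  intro ε hε hεlt
  set θ := k3 / (k1 + k3) with hθ_def
  have hθ : 0 < θ := by positivity
  have hθ' : 0 < 1 - θ := by rw [sub_pos, div_lt_one (by positivity)]; linarith
  have hbalance : (1 - θ) * k3 = θ * k1 := by rw [hθ_def]; field_simp; ring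
  have hgain : k1 * k3 < kx * (kz / ε - k2) := by
    rw [lt_div_iff₀ (by positivity)] at hεlt
    rw [mul_sub, mul_div_assoc', lt_sub_iff_add_lt, lt_div_iff₀ hε]
    linarith
  have hposdef : (θ * k1) ^ 2 < ((1 - θ) * kx) * (θ * (kz / ε - k2)) := by
    calc (θ * k1) ^ 2 = θ * k1 * ((1 - θ) * k3) := by rw [hbalance]; ring
      _ = θ * (1 - θ) * (k1 * k3) := by ring
      _ < θ * (1 - θ) * (kx * (kz / ε - k2)) := by gcongr
      _ = ((1 - θ) * kx) * (θ * (kz / ε - k2)) := by ring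
  obtain ⟨lam, hlam, hform⟩ := exists_pos_mul_sq_add_sq_le_of_sq_lt_mul (by positivity) hposdef
  refine ⟨lam, hlam, fun a b x _ _ => ?_⟩
  have hI : 0 ≤ μF * O.indicator 1 x := mul_nonneg hμF.le (Set.indicator_nonneg (by simp) x)
  have hIθ : (1 - θ) * (μF * O.indicator 1 x) ≤ μF * O.indicator 1 x :=
    mul_le_of_le_one_left hI (by linarith)
  linear_combination hform a b + hIθ + (a * b) * hbalance

/-- recurrence variant of the composite quadratic-form estimate: with
`θ* = k₃/(k₁+k₃)` and `ε* = kₓk_z/(k₁k₃ + kₓk₂)`, for every `ε ∈ (0, ε*)` there is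
`λ > 0` such that for all `a, b ≥ 0` and all `x`,
`(1-θ*)(-kₓ a² + μ_F 𝟙_O(x) + k₃ a b) + θ*(k₁ a b + k₂ b² - (k_z/ε) b²)
  ≤ -λ (a² + b²) + μ_F 𝟙_O(x)`. -/
theorem composite_quadratic_estimate_recurrence
    (n1 : ℕ)
    (kx kz k1 k2 k3 μF : ℝ)
    (hkx : 0 < kx) (hkz : 0 < kz) (hk1 : 0 < k1) (hk2 : 0 < k2) (hk3 : 0 < k3)
    (hμF : 0 < μF)
    (O : Set (EuclideanSpace ℝ (Fin n1))) :
    ∀ ε : ℝ, 0 < ε → ε < kx * kz / (k1 * k3 + kx * k2) →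
      ∃ lam : ℝ, 0 < lam ∧ ∀ (a b : ℝ) (x : EuclideanSpace ℝ (Fin n1)),
        0 ≤ a → 0 ≤ b →
        (1 - k3 / (k1 + k3)) * (-(kx * a ^ 2) + μF * O.indicator 1 x + k3 * a * b)
          + (k3 / (k1 + k3)) * (k1 * a * b + k2 * b ^ 2 - (kz / ε) * b ^ 2)
        ≤ -lam * (a ^ 2 + b ^ 2) + μF * O.indicator 1 x :=
  composite_quadratic_estimate_recurrence_general n1 kx kz k1 k2 k3 μF hkx hk1 hk2 hk3 hμF O
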